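/- arXiv:1009.2463 — 3 statements merged into one kernel-verified Lean document; each statement's English description precedes it below -/
import Mathlib

section
/- Let f be a probability density function on [0,∞) that is positive, absolutely continuous, and such that f′ is bounded on every compact subinterval of [0,∞). Let m be the renewal density, i.e., the solution of m(t) = f(t) + ∫₀ᵗ m(x) f(t−x) dx for t ≥ 0. Then m is absolutely continuous and for all t > 0: m′(t) = f′(t) + m(0) f(t) + ∫₀ᵗ m′(x) f(t−x) dx. -/
/-!
Write `a ⋆₀ b` for the causal convolution `t ↦ ∫₀ᵗ a(x) b(t - x) dx`. On `[0, t]` it is the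
ordinary convolution of the truncations of `a` and `b` to `[0, t]`, so it is commutative and,
when one factor is bounded, associative (Fubini). The derivative of `m` is
`m' = f' + f(0) m + f' ⋆₀ m` on `[0, ∞)`. Its integral over `[0, t]` is `m t - m 0` because
`∫₀ᵗ f' ⋆₀ m = (1 ⋆₀ f') ⋆₀ m = m ⋆₀ (f - f 0)`, and the renewal equation for `m'` follows from
`(f' ⋆₀ m) ⋆₀ f = f' ⋆₀ (m ⋆₀ f) = f' ⋆₀ (m - f)`, where the boundedness of `f'` is used.
-/

open MeasureTheory Set
open scoped Convolution
open ContinuousLinearMap (lsmul mul)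

theorem IntervalIntegrable.bdd_mul {f g : ℝ → ℝ} {a b C : ℝ}
    (hg : IntervalIntegrable g volume a b) (hf : IntervalIntegrable f volume a b)
    (hf_bdd : ∀ x ∈ uIcc a b, |f x| ≤ C) :
    IntervalIntegrable (fun x => f x * g x) volume a b := by
  rw [intervalIntegrable_iff] at *
  exact hg.bdd_mul hf.aestronglyMeasurable
    (ae_restrict_of_forall_mem measurableSet_uIoc fun x hx => hf_bdd x (uIoc_subset_uIcc hx))

theorem IntervalIntegrable.mul_comp_sub_of_continuousOn {f g : ℝ → ℝ} {t : ℝ} (ht : 0 ≤ t)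
    (hg : IntervalIntegrable g volume 0 t) (hf : ContinuousOn f (Icc 0 t)) :
    IntervalIntegrable (fun x => g x * f (t - x)) volume 0 t :=
  hg.mul_continuousOn <| hf.comp (continuousOn_const.sub continuousOn_id) fun x hx => by
    rw [uIcc_of_le ht] at hx
    exact ⟨sub_nonneg.2 hx.2, by linarith [hx.1]⟩

theorem intervalIntegrable_indicator_Ici {g : ℝ → ℝ}
    (hg : ∀ t, 0 ≤ t → IntegrableOn g (Icc 0 t)) (a b : ℝ) :
    IntervalIntegrable ((Ici 0).indicator g) volume a b := by
  rw [intervalIntegrable_iff, integrableOn_indicator_iff measurableSet_Ici]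
  exact (hg _ (le_max_right (max a b) 0)).mono_set fun x hx =>
    ⟨hx.1, hx.2.2.trans (le_max_left _ _)⟩

section CausalConv

noncomputable def causalConv (a b : ℝ → ℝ) (t : ℝ) : ℝ :=
  ∫ x in (0 : ℝ)..t, a x * b (t - x)

variable {a a' b b' c : ℝ → ℝ} {t C : ℝ}

theorem causalConv_comm (a b : ℝ → ℝ) (t : ℝ) : causalConv a b t = causalConv b a t := by
  have h := intervalIntegral.integral_comp_sub_left (fun x => b x * a (t - x)) (a := 0) (b := t) t
  simp only [sub_sub_cancel, sub_self, sub_zero] at h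
  simp only [causalConv, ← h, mul_comm]

theorem causalConv_one_left (a : ℝ → ℝ) (t : ℝ) :
    causalConv (fun _ => 1) a t = ∫ x in (0 : ℝ)..t, a x := by
  rw [causalConv_comm]
  simp only [causalConv, mul_one]

theorem causalConv_congr (ht : 0 ≤ t) (ha : EqOn a a' (Icc 0 t)) (hb : EqOn b b' (Icc 0 t)) :
    causalConv a b t = causalConv a' b' t :=
  intervalIntegral.integral_congr fun x hx => by
    rw [uIcc_of_le ht] at hx
    simp only [ha hx, hb ⟨sub_nonneg.2 hx.2, by linarith [hx.1]⟩]

theorem convolution_eq_causalConv (ha : ∀ x < 0, a x = 0) (hb : ∀ x < 0, b x = 0) (ht : 0 ≤ t) :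
    (a ⋆ b) t = causalConv a b t := by
  rw [convolution_def, causalConv, intervalIntegral.integral_of_le ht,
    ← integral_Icc_eq_integral_Ioc, ← setIntegral_eq_integral_of_forall_compl_eq_zero]
  · rfl
  intro x hx
  rcases not_and_or.1 hx with hx | hx
  · simp [ha x (not_le.1 hx)]
  · simp [hb (t - x) (by linarith [not_le.1 hx])]

theorem convolution_eq_zero_of_neg (ha : ∀ x < 0, a x = 0) (hb : ∀ x < 0, b x = 0) (ht : t < 0) :
    (a ⋆ b) t = 0 := by
  rw [convolution_def]
  refine integral_eq_zero_of_ae (Filter.Eventually.of_forall fun x => ?_)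
  rcases lt_or_ge x 0 with hx | hx
  · simp [ha x hx]
  · simp [hb (t - x) (by linarith)]

theorem indicator_Icc_eq_zero_of_neg (a : ℝ → ℝ) (t : ℝ) :
    ∀ x < 0, (Icc 0 t).indicator a x = 0 :=
  fun _ hx => indicator_of_notMem (fun h => (not_le.2 hx) h.1) a

theorem eqOn_indicator_Icc {s : ℝ} (hs : s ≤ t) : EqOn a ((Icc 0 t).indicator a) (Icc 0 s) :=
  fun x hx => (indicator_of_mem (show x ∈ Icc 0 t from ⟨hx.1, hx.2.trans hs⟩) a).symm

theorem eqOn_causalConv_convolution_indicator (a b : ℝ → ℝ) (t : ℝ) :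
    EqOn (causalConv a b) ((Icc 0 t).indicator a ⋆ (Icc 0 t).indicator b) (Icc 0 t) :=
  fun s hs => by
    rw [convolution_eq_causalConv (indicator_Icc_eq_zero_of_neg a t)
      (indicator_Icc_eq_zero_of_neg b t) hs.1]
    exact causalConv_congr hs.1 (eqOn_indicator_Icc hs.2) (eqOn_indicator_Icc hs.2)

theorem integrableOn_causalConv (ha : IntegrableOn a (Icc 0 t)) (hb : IntegrableOn b (Icc 0 t)) :
    IntegrableOn (causalConv a b) (Icc 0 t) :=
  (((integrable_indicator_iff measurableSet_Icc).2 ha).integrable_convolution (lsmul ℝ ℝ)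
    ((integrable_indicator_iff measurableSet_Icc).2 hb)).integrableOn.congr_fun
    (eqOn_causalConv_convolution_indicator a b t).symm measurableSet_Icc

theorem causalConv_assoc (ht : 0 ≤ t) (ha : IntegrableOn a (Icc 0 t))
    (ha_bdd : ∀ x ∈ Icc 0 t, |a x| ≤ C) (hb : IntegrableOn b (Icc 0 t))
    (hc : IntegrableOn c (Icc 0 t)) :
    causalConv (causalConv a b) c t = causalConv a (causalConv b c) t := by
  set a₀ := (Icc 0 t).indicator a
  set b₀ := (Icc 0 t).indicator b
  set c₀ := (Icc 0 t).indicator c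
  have ha₀ : Integrable a₀ := (integrable_indicator_iff measurableSet_Icc).2 ha
  have hb₀ : Integrable b₀ := (integrable_indicator_iff measurableSet_Icc).2 hb
  have hc₀ : Integrable c₀ := (integrable_indicator_iff measurableSet_Icc).2 hc
  have ha₀_bdd : ∀ x, ‖a₀ x‖ ≤ C := fun x => by
    by_cases hx : x ∈ Icc 0 t
    · simpa only [a₀, indicator_of_mem hx, Real.norm_eq_abs] using ha_bdd x hx
    · simp only [a₀, indicator_of_notMem hx, norm_zero]
      exact (abs_nonneg _).trans (ha_bdd 0 ⟨le_rfl, ht⟩)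
  have hab₀ : ∀ x < 0, (a₀ ⋆ b₀) x = 0 := fun x hx =>
    convolution_eq_zero_of_neg (indicator_Icc_eq_zero_of_neg a t)
      (indicator_Icc_eq_zero_of_neg b t) hx
  have hbc₀ : ∀ x < 0, (b₀ ⋆ c₀) x = 0 := fun x hx =>
    convolution_eq_zero_of_neg (indicator_Icc_eq_zero_of_neg b t)
      (indicator_Icc_eq_zero_of_neg c t) hx
  -- absolute convergence of the triple integral: bounded times integrable
  have h_abs : ConvolutionExistsAt (fun x => ‖a₀ x‖)
      ((fun x => ‖b₀ x‖) ⋆[mul ℝ ℝ] fun x => ‖c₀ x‖) t (mul ℝ ℝ) volume :=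
    ((hb₀.norm.integrable_convolution (mul ℝ ℝ) hc₀.norm).comp_sub_left t).bdd_mul
      ha₀.norm.aestronglyMeasurable (Filter.Eventually.of_forall fun x => by simpa using ha₀_bdd x)
  calc causalConv (causalConv a b) c t = causalConv (a₀ ⋆ b₀) c₀ t :=
        causalConv_congr ht (eqOn_causalConv_convolution_indicator a b t)
          (eqOn_indicator_Icc le_rfl)
    _ = ((a₀ ⋆ b₀) ⋆ c₀) t :=
        (convolution_eq_causalConv hab₀ (indicator_Icc_eq_zero_of_neg c t) ht).symm
    _ = (a₀ ⋆ (b₀ ⋆ c₀)) t :=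
        convolution_assoc (lsmul ℝ ℝ) (lsmul ℝ ℝ) (lsmul ℝ ℝ) (lsmul ℝ ℝ)
          (fun x y z => by simp [mul_assoc]) ha₀.aestronglyMeasurable hb₀.aestronglyMeasurable
          hc₀.aestronglyMeasurable (ha₀.ae_convolution_exists _ hb₀)
          (hb₀.norm.ae_convolution_exists _ hc₀.norm) h_abs
    _ = causalConv a₀ (b₀ ⋆ c₀) t :=
        convolution_eq_causalConv (indicator_Icc_eq_zero_of_neg a t) hbc₀ ht
    _ = causalConv a (causalConv b c) t :=
        causalConv_congr ht (eqOn_indicator_Icc le_rfl).symm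
          (eqOn_causalConv_convolution_indicator b c t).symm

theorem causalConv_add_left (ha : IntervalIntegrable (fun x => a x * c (t - x)) volume 0 t)
    (hb : IntervalIntegrable (fun x => b x * c (t - x)) volume 0 t) :
    causalConv (fun x => a x + b x) c t = causalConv a c t + causalConv b c t := by
  simp only [causalConv, add_mul]
  exact intervalIntegral.integral_add ha hb

theorem causalConv_sub_right (hb : IntervalIntegrable (fun x => a x * b (t - x)) volume 0 t)
    (hc : IntervalIntegrable (fun x => a x * c (t - x)) volume 0 t) :
    causalConv a (fun x => b x - c x) t = causalConv a b t - causalConv a c t := by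
  simp only [causalConv, mul_sub]
  exact intervalIntegral.integral_sub hb hc

theorem causalConv_const_mul_left (r : ℝ) (a b : ℝ → ℝ) (t : ℝ) :
    causalConv (fun x => r * a x) b t = r * causalConv a b t := by
  simp only [causalConv, mul_assoc]
  exact intervalIntegral.integral_const_mul _ _

end CausalConv

section Renewal

variable {f f' m : ℝ → ℝ}

theorem continuousOn_of_eq_add_integral (ht : 0 ≤ t) (hf' : IntegrableOn f' (Icc 0 t))
    (hf : ∀ x ∈ Icc 0 t, f x = f 0 + ∫ y in (0 : ℝ)..x, f' y) : ContinuousOn f (Icc 0 t) := by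
  rw [← uIcc_of_le ht] at hf' hf ⊢
  exact (continuousOn_const.add (intervalIntegral.continuousOn_primitive_interval hf')).congr hf

theorem integral_causalConv_of_eq_add_integral (ht : 0 ≤ t) (hf' : IntegrableOn f' (Icc 0 t))
    (hm : IntegrableOn m (Icc 0 t)) (hf : ∀ x ∈ Icc 0 t, f x = f 0 + ∫ y in (0 : ℝ)..x, f' y) :
    ∫ x in (0 : ℝ)..t, causalConv f' m x = causalConv m f t - f 0 * ∫ x in (0 : ℝ)..t, m x := by
  have hm_int : IntervalIntegrable m volume 0 t :=
    (intervalIntegrable_iff_integrableOn_Icc_of_le ht).2 hm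
  calc ∫ x in (0 : ℝ)..t, causalConv f' m x
      = causalConv (fun _ => 1) (causalConv f' m) t := (causalConv_one_left _ _).symm
    _ = causalConv (causalConv (fun _ => 1) f') m t :=
        (causalConv_assoc ht (integrableOn_const measure_Icc_lt_top.ne) (fun _ _ => abs_one.le)
          hf' hm).symm
    _ = causalConv m (fun x => f x - f 0) t := by
        rw [causalConv_comm]
        refine causalConv_congr ht (eqOn_refl _ _) fun x hx => ?_
        rw [causalConv_one_left, hf x hx]
        ring
    _ = causalConv m f t - f 0 * ∫ x in (0 : ℝ)..t, m x := by
        simp only [causalConv, mul_sub]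
        rw [intervalIntegral.integral_sub
          (hm_int.mul_comp_sub_of_continuousOn ht (continuousOn_of_eq_add_integral ht hf' hf))
          (hm_int.mul_const _), intervalIntegral.integral_mul_const, mul_comm]

theorem causalConv_causalConv_of_renewal (ht : 0 ≤ t) (ha : IntegrableOn a (Icc 0 t))
    (ha_bdd : ∀ x ∈ Icc 0 t, |a x| ≤ C) (hm : IntegrableOn m (Icc 0 t))
    (hf : ContinuousOn f (Icc 0 t)) (hm_eq : ∀ x ∈ Icc 0 t, m x = f x + causalConv m f x) :
    causalConv (causalConv a m) f t = causalConv a m t - causalConv a f t := by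
  have ha_int : IntervalIntegrable a volume 0 t :=
    (intervalIntegrable_iff_integrableOn_Icc_of_le ht).2 ha
  have hm_refl : IntervalIntegrable (fun x => m (t - x)) volume 0 t := by
    simpa using ((intervalIntegrable_iff_integrableOn_Icc_of_le ht).2 hm).comp_sub_left t |>.symm
  rw [causalConv_assoc ht ha ha_bdd hm hf.integrableOn_Icc,
    causalConv_congr ht (eqOn_refl a _) fun x hx => show causalConv m f x = m x - f x by
      linarith [hm_eq x hx]]
  exact causalConv_sub_right
    (hm_refl.bdd_mul ha_int fun x hx => ha_bdd x (by rwa [uIcc_of_le ht] at hx))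
    (ha_int.mul_comp_sub_of_continuousOn ht hf)

/-- The formal derivative of `m = f + causalConv f m`, obtained by differentiating under the
integral sign: `(causalConv f m)' = f 0 * m + causalConv f' m`. -/
noncomputable def renewalDeriv (f f' m : ℝ → ℝ) (x : ℝ) : ℝ :=
  f' x + f 0 * m x + causalConv f' m x

theorem integrableOn_renewalDeriv (hf' : IntegrableOn f' (Icc 0 t))
    (hm : IntegrableOn m (Icc 0 t)) :
    IntegrableOn (renewalDeriv f f' m) (Icc 0 t) :=
  (hf'.add (hm.const_mul _)).add (integrableOn_causalConv hf' hm)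

theorem integral_renewalDeriv (ht : 0 ≤ t) (hf' : IntegrableOn f' (Icc 0 t))
    (hm : IntegrableOn m (Icc 0 t)) (hf : ∀ x ∈ Icc 0 t, f x = f 0 + ∫ y in (0 : ℝ)..x, f' y)
    (hm_eq : m t = f t + causalConv m f t) :
    ∫ x in (0 : ℝ)..t, renewalDeriv f f' m x = m t - f 0 := by
  have hI {g : ℝ → ℝ} : IntegrableOn g (Icc 0 t) → IntervalIntegrable g volume 0 t :=
    (intervalIntegrable_iff_integrableOn_Icc_of_le ht).2
  simp only [renewalDeriv]
  rw [intervalIntegral.integral_add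
      (hI (g := fun x => f' x + f 0 * m x) (hf'.add (hm.const_mul _)))
      (hI (integrableOn_causalConv hf' hm)),
    intervalIntegral.integral_add (hI hf') (hI (hm.const_mul _)),
    intervalIntegral.integral_const_mul, integral_causalConv_of_eq_add_integral ht hf' hm hf]
  linarith [hf t ⟨ht, le_rfl⟩]

theorem renewalDeriv_eq_add_causalConv (ht : 0 ≤ t) (hf' : IntegrableOn f' (Icc 0 t))
    (hf'_bdd : ∀ x ∈ Icc 0 t, |f' x| ≤ C) (hm : IntegrableOn m (Icc 0 t))
    (hf : ∀ x ∈ Icc 0 t, f x = f 0 + ∫ y in (0 : ℝ)..x, f' y)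
    (hm_eq : ∀ x ∈ Icc 0 t, m x = f x + causalConv m f x) :
    renewalDeriv f f' m t = f' t + f 0 * f t + causalConv (renewalDeriv f f' m) f t := by
  have hI {g : ℝ → ℝ} : IntegrableOn g (Icc 0 t) → IntervalIntegrable g volume 0 t :=
    (intervalIntegrable_iff_integrableOn_Icc_of_le ht).2
  have hfc := continuousOn_of_eq_add_integral ht hf' hf
  have h_expand : causalConv (renewalDeriv f f' m) f t =
      causalConv f' f t + f 0 * causalConv m f t + causalConv (causalConv f' m) f t := by
    have hmul {g : ℝ → ℝ} (hg : IntegrableOn g (Icc 0 t)) :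
        IntervalIntegrable (fun x => g x * f (t - x)) volume 0 t :=
      (hI hg).mul_comp_sub_of_continuousOn ht hfc
    change causalConv (fun x => f' x + f 0 * m x + causalConv f' m x) f t = _
    rw [causalConv_add_left
        (hmul (g := fun x => f' x + f 0 * m x) (hf'.add (hm.const_mul _)))
        (hmul (integrableOn_causalConv hf' hm)),
      causalConv_add_left (hmul hf') (hmul (g := fun x => f 0 * m x) (hm.const_mul _)),
      causalConv_const_mul_left]
  rw [h_expand, causalConv_causalConv_of_renewal ht hf' hf'_bdd hm hfc hm_eq, renewalDeriv]
  linear_combination f 0 * hm_eq t ⟨ht, le_rfl⟩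

end Renewal

theorem renewal_density_derivative_eq'_general
    (f f' m : ℝ → ℝ)
    (hf'_intloc : ∀ a b : ℝ, IntervalIntegrable f' volume a b)
    (hf_ac : ∀ t ∈ Set.Ici (0 : ℝ), f t = f 0 + ∫ x in (0 : ℝ)..t, f' x)
    (hf'_bdd : ∀ a b : ℝ, ∃ C : ℝ, ∀ x ∈ Set.Icc a b, |f' x| ≤ C)
    (hm_loc : LocallyIntegrableOn m (Set.Ici 0))
    (hm_eq : ∀ t ∈ Set.Ici (0 : ℝ), m t = f t + ∫ x in (0 : ℝ)..t, m x * f (t - x)) :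
    ∃ m' : ℝ → ℝ,
      (∀ a b : ℝ, IntervalIntegrable m' volume a b) ∧
      (∀ t ∈ Set.Ici (0 : ℝ), m t = m 0 + ∫ x in (0 : ℝ)..t, m' x) ∧
      ∀ t : ℝ, 0 < t →
        m' t = f' t + m 0 * f t + ∫ x in (0 : ℝ)..t, m' x * f (t - x) := by
  have hm0 : m 0 = f 0 := by simpa using hm_eq 0 self_mem_Ici
  have hf' (t : ℝ) (ht : 0 ≤ t) : IntegrableOn f' (Icc 0 t) :=
    (intervalIntegrable_iff_integrableOn_Icc_of_le ht).1 (hf'_intloc 0 t)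
  have hm (t : ℝ) : IntegrableOn m (Icc 0 t) :=
    hm_loc.integrableOn_compact_subset (fun _ hx => hx.1) isCompact_Icc
  have hf (t : ℝ) : ∀ x ∈ Icc 0 t, f x = f 0 + ∫ y in (0 : ℝ)..x, f' y := fun x hx => hf_ac x hx.1
  have h_eqOn (t : ℝ) :
      EqOn ((Ici 0).indicator (renewalDeriv f f' m)) (renewalDeriv f f' m) (Icc 0 t) :=
    fun x hx => indicator_of_mem (show x ∈ Ici 0 from hx.1) _
  refine ⟨(Ici 0).indicator (renewalDeriv f f' m),
    intervalIntegrable_indicator_Ici fun t ht => integrableOn_renewalDeriv (hf' t ht) (hm t),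
    fun t ht => ?_, fun t ht => ?_⟩
  · rw [intervalIntegral.integral_congr (by rw [uIcc_of_le ht]; exact h_eqOn t),
      integral_renewalDeriv ht (hf' t ht) (hm t) (hf t) (hm_eq t ht), hm0]
    ring
  · obtain ⟨C, hC⟩ := hf'_bdd 0 t
    change _ = _ + _ * _ + causalConv _ f t
    rw [h_eqOn t ⟨ht.le, le_rfl⟩, causalConv_congr ht.le (h_eqOn t) (eqOn_refl f _), hm0]
    exact renewalDeriv_eq_add_causalConv ht.le (hf' t ht.le) hC (hm t) (hf t)
      fun x hx => hm_eq x hx.1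

/-- **Equation (6) of the paper.**
Let `f` be a probability density on `[0, ∞)` that is positive, absolutely continuous (with
a.e. derivative `f'`, so that `f t = f 0 + ∫ x in 0..t, f' x`), and such that `f'` is bounded
on every compact subinterval of `[0, ∞)`.  Let `m` be the renewal density, i.e. the solution
of `m t = f t + ∫ x in 0..t, m x * f (t - x)` for `t ≥ 0`.  Then `m` is absolutely continuous
and a version `m'` of its derivative satisfies, for all `t > 0`,
`m' t = f' t + m 0 * f t + ∫ x in 0..t, m' x * f (t - x)`. -/
theorem renewal_density_derivative_eq'
    (f f' m : ℝ → ℝ)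
    (hf_meas : Measurable f)
    (hf_pos : ∀ x ∈ Set.Ici (0 : ℝ), 0 < f x)
    (hf_int : IntegrableOn f (Set.Ici 0))
    (hf_one : (∫ x in Set.Ici (0 : ℝ), f x) = 1)
    (hf'_meas : Measurable f')
    (hf'_intloc : ∀ a b : ℝ, IntervalIntegrable f' volume a b)
    (hf_ac : ∀ t ∈ Set.Ici (0 : ℝ), f t = f 0 + ∫ x in (0 : ℝ)..t, f' x)
    (hf'_bdd : ∀ a b : ℝ, ∃ C : ℝ, ∀ x ∈ Set.Icc a b, |f' x| ≤ C)
    (hm_meas : Measurable m)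
    (hm_loc : LocallyIntegrableOn m (Set.Ici 0))
    (hm_eq : ∀ t ∈ Set.Ici (0 : ℝ), m t = f t + ∫ x in (0 : ℝ)..t, m x * f (t - x)) :
    ∃ m' : ℝ → ℝ,
      (∀ a b : ℝ, IntervalIntegrable m' volume a b) ∧
      (∀ t ∈ Set.Ici (0 : ℝ), m t = m 0 + ∫ x in (0 : ℝ)..t, m' x) ∧
      ∀ t : ℝ, 0 < t →
        m' t = f' t + m 0 * f t + ∫ x in (0 : ℝ)..t, m' x * f (t - x) :=
  renewal_density_derivative_eq'_general f f' m hf'_intloc hf_ac hf'_bdd hm_loc hm_eq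
end

section
/- Let f be a positive probability density function on [0,∞), continuous on [0,∞) and continuously differentiable on [t₂, t₃] for some 0 < t₂ < t₃ (one-sided derivatives at the endpoints), with hazard rate r(t) = f(t)/F̄(t). Let m be the renewal density, i.e., the solution of m(t) = f(t) + ∫₀ᵗ m(x) f(t−x) dx for t ≥ 0, and assume m is differentiable with m′(x) < 0 for all x ∈ (0, t₂). If r′(t) ≤ r(t)² − f(0) r(t) for all t ∈ (t₂, t₃), then m′(t) < 0 for all t ∈ (t₂, t₃); in particular, m is strictly decreasing on [t₂, t₃]. -/
/-!
Through the renewal equation, for `t₂ ≤ p ≤ q ≤ t₃` with `q - p ≤ t₂`,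
`m q - m p = (f q - f p) + ∫_p^q m (q - x) f x dx + ∫_0^p (m (q - x) - m (p - x)) f x dx`.
Since `f' + f 0 * f = F̄ * (r' - r ^ 2 + f 0 * r)`, the hazard-rate condition says
`f' + f 0 * f ≤ 0` on `(t₂, t₃)`, so `f q - f p ≤ -f 0 ∫_p^q f`; and `m ≤ m 0 = f 0` on `[0, t₂]`
bounds the middle term by `f 0 ∫_p^q f`. Hence `m q - m p ≤ ∫_0^p (m (q - x) - m (p - x)) f x dx`.

If `K ≥ 0` is the largest increase of `m` over such a pair, the integrand is at most `K f x`, so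
`K ≤ K ∫_0^p f = K (1 - F̄ p)` with `F̄ p > 0`, forcing `K = 0`: `m` is antitone on `[0, t₃]`.
Feeding this back, the integrand is at most `c (m (q - x) - m (p - x))` with `c = min f > 0`,
and after the substitution `y = p - x` the integral telescopes to
`∫_p^q m - ∫_0^(q-p) m ≤ (q - p) (m t₂ - m (t₂ / 2)) < 0` for `q - p ≤ t₂ / 2`.
So the right difference quotients of `m` on `(t₂, t₃)` stay below a negative constant.
-/

open MeasureTheory Set

/-- The survival function `F̄ t = ∫_t^∞ f x dx` of a density `f` on `[0, ∞)`. -/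
noncomputable def survival (f : ℝ → ℝ) (t : ℝ) : ℝ := ∫ x in Set.Ioi t, f x

/-- The hazard rate `r t = f t / F̄ t`. -/
noncomputable def hazardRate (f : ℝ → ℝ) (t : ℝ) : ℝ := f t / survival f t

open Filter Topology

lemma sub_le_neg_mul_integral_of_deriv_add_mul_nonpos {f f' : ℝ → ℝ} {a b c : ℝ}
    (hf : ContinuousOn f (Icc a b)) (hf' : ∀ x ∈ Ioo a b, HasDerivAt f (f' x) x)
    (hle : ∀ x ∈ Ioo a b, f' x + c * f x ≤ 0) :
    ∀ p ∈ Icc a b, ∀ q ∈ Icc a b, p ≤ q → f q - f p ≤ -(c * ∫ x in p..q, f x) := by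
  intro p hp q hq hpq
  have hint : ∀ x ∈ Icc a b, IntervalIntegrable f volume a x := fun x hx =>
    (hf.mono (Icc_subset_Icc_right hx.2)).intervalIntegrable_of_Icc hx.1
  have hprim : ContinuousOn (fun x => ∫ y in a..x, f y) (Icc a b) := by
    simpa [uIcc_of_le (hp.1.trans hp.2)] using
      intervalIntegral.continuousOn_primitive_interval (μ := volume) (a := a) (b := b)
        (by simpa [uIcc_of_le (hp.1.trans hp.2)] using hf.integrableOn_Icc)
  have hanti : AntitoneOn (fun x => f x + c * ∫ y in a..x, f y) (Icc a b) := by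
    refine antitoneOn_of_hasDerivWithinAt_nonpos (f' := fun x => f' x + c * f x)
      (convex_Icc a b) (hf.add (continuousOn_const.mul hprim)) (fun x hx => ?_)
      (fun x hx => hle x (by rwa [interior_Icc] at hx))
    rw [interior_Icc] at hx ⊢
    exact ((hf' x hx).add ((intervalIntegral.integral_hasDerivAt_right
      (hint x (Ioo_subset_Icc_self hx))
      ((hf.mono Ioo_subset_Icc_self).stronglyMeasurableAtFilter isOpen_Ioo x hx)
      (hf.continuousAt (Icc_mem_nhds hx.1 hx.2))).const_mul c)).hasDerivWithinAt
  have h := hanti hp hq hpq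
  rw [← intervalIntegral.integral_interval_sub_left (hint q hq) (hint p hp)]
  simp only at h
  linarith

lemma HasDerivAt.le_of_eventually_sub_le {m : ℝ → ℝ} {d t C : ℝ} (hm : HasDerivAt m d t)
    (h : ∀ᶠ s in 𝓝[>] t, m s - m t ≤ C * (s - t)) : d ≤ C := by
  refine le_of_tendsto ((hasDerivAt_iff_tendsto_slope.1 hm).mono_left
    (nhdsWithin_mono t (show Ioi t ⊆ {t}ᶜ from fun s hs => ne_of_gt hs))) ?_
  filter_upwards [h, self_mem_nhdsWithin] with s hs hts
  rwa [slope_def_field, div_le_iff₀ (sub_pos.2 hts)]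

lemma AntitoneOn.integral_comp_add_sub_le {m : ℝ → ℝ} {a b h : ℝ}
    (hm : AntitoneOn m (Icc a (b + h))) (hab : a ≤ b) (hh : 0 ≤ h) :
    ∫ y in a..b, (m (y + h) - m y) ≤ h * (m b - m (a + h)) := by
  have hint : ∀ c d, a ≤ c → c ≤ d → d ≤ b + h → IntervalIntegrable m volume c d :=
    fun c d hac hcd hdb => (hm.mono (by
      rw [uIcc_of_le hcd]; exact Icc_subset_Icc hac hdb)).intervalIntegrable
  have hright : ∫ y in b..b + h, m y ≤ h * m b := by
    simpa using intervalIntegral.integral_mono_on (by linarith)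
      (hint b (b + h) hab (by linarith) le_rfl) intervalIntegrable_const
      fun y hy => hm ⟨hab, by linarith⟩ ⟨hab.trans hy.1, hy.2⟩ hy.1
  have hleft : h * m (a + h) ≤ ∫ y in a..a + h, m y := by
    simpa using intervalIntegral.integral_mono_on (by linarith) intervalIntegrable_const
      (hint a (a + h) le_rfl (by linarith) (by linarith))
      fun y hy => hm ⟨hy.1, by linarith [hy.2]⟩ ⟨by linarith, by linarith⟩ hy.2
  have hshift : IntervalIntegrable (fun y => m (y + h)) volume a b := by
    simpa using (hint (a + h) (b + h) (by linarith) (by linarith) le_rfl).comp_add_right h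
  rw [intervalIntegral.integral_sub hshift (hint a b le_rfl hab (by linarith)),
    intervalIntegral.integral_comp_add_right,
    intervalIntegral.integral_interval_sub_interval_comm'
      (hint (a + h) (b + h) (by linarith) (by linarith) le_rfl)
      (hint a b le_rfl hab (by linarith)) (hint a (a + h) le_rfl (by linarith) (by linarith)).symm]
  linarith

lemma intervalIntegral_mul_comp_sub_comm (m f : ℝ → ℝ) (t : ℝ) :
    ∫ x in (0 : ℝ)..t, m x * f (t - x) = ∫ x in (0 : ℝ)..t, m (t - x) * f x := by
  simpa using (intervalIntegral.integral_comp_sub_left (fun x => m x * f (t - x)) t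
    (a := 0) (b := t)).symm

section Survival

variable {f : ℝ → ℝ}

lemma survival_eq_integral_sub_integral (hf_int : IntegrableOn f (Ici 0)) {t : ℝ}
    (ht : 0 ≤ t) : survival f t = (∫ x in Ici (0 : ℝ), f x) - ∫ x in (0 : ℝ)..t, f x := by
  rw [survival, intervalIntegral.integral_of_le ht, integral_Ioc_eq_integral_Ioo,
    ← integral_Ico_eq_integral_Ioo, ← integral_Ici_eq_integral_Ioi, ← Ico_union_Ici_eq_Ici ht,
    setIntegral_union ((Iio_disjoint_Ici le_rfl).mono_left Ico_subset_Iio_self) measurableSet_Ici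
      (hf_int.mono_set Ico_subset_Ici_self) (hf_int.mono_set (Ici_subset_Ici.2 ht))]
  ring

lemma survival_pos (hf_pos : ∀ x ∈ Ici (0 : ℝ), 0 < f x) (hf_int : IntegrableOn f (Ici 0))
    {t : ℝ} (ht : 0 ≤ t) : 0 < survival f t := by
  have hsub : Ioi t ⊆ Ici 0 := Ioi_subset_Ici_self.trans (Ici_subset_Ici.2 ht)
  rw [survival, setIntegral_pos_iff_support_of_nonneg_ae
    ((ae_restrict_iff' measurableSet_Ioi).2
      (Eventually.of_forall fun x hx => (hf_pos x (hsub hx)).le))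
    (hf_int.mono_set hsub),
    inter_eq_right.2 (show Ioi t ⊆ Function.support f from fun x hx => (hf_pos x (hsub hx)).ne')]
  simp

lemma intervalIntegral_lt_one_of_density (hf_pos : ∀ x ∈ Ici (0 : ℝ), 0 < f x)
    (hf_int : IntegrableOn f (Ici 0)) (hf_one : ∫ x in Ici (0 : ℝ), f x = 1) {t : ℝ}
    (ht : 0 ≤ t) : ∫ x in (0 : ℝ)..t, f x < 1 := by
  linarith [survival_eq_integral_sub_integral hf_int ht, survival_pos hf_pos hf_int ht]

lemma hasDerivAt_survival (hf_cont : ContinuousOn f (Ici 0)) (hf_int : IntegrableOn f (Ici 0))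
    {t : ℝ} (ht : 0 < t) : HasDerivAt (survival f) (-f t) t := by
  have hF : HasDerivAt (fun u => ∫ x in (0 : ℝ)..u, f x) (f t) t :=
    intervalIntegral.integral_hasDerivAt_right
      (hf_cont.mono Icc_subset_Ici_self |>.intervalIntegrable_of_Icc ht.le)
      (hf_cont.mono Ioi_subset_Ici_self |>.stronglyMeasurableAtFilter isOpen_Ioi t ht)
      (hf_cont.continuousAt (Ici_mem_nhds ht))
  refine (((hasDerivAt_const t (∫ x in Ici (0 : ℝ), f x)).sub hF).congr_of_eventuallyEq ?_)
    |>.congr_deriv (zero_sub _)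
  filter_upwards [Ioi_mem_nhds ht] with s hs
  exact survival_eq_integral_sub_integral hf_int hs.le

lemma add_const_mul_eq_survival_mul_hazardRate {f' t : ℝ} (hf : HasDerivAt f f' t)
    (hS : HasDerivAt (survival f) (-f t) t) (hS0 : survival f t ≠ 0) (c : ℝ) :
    f' + c * f t = survival f t *
      (deriv (hazardRate f) t - hazardRate f t ^ 2 + c * hazardRate f t) := by
  have hr : HasDerivAt (hazardRate f) _ t := hf.div hS hS0
  rw [hr.deriv, hazardRate]
  field_simp
  ring

lemma sub_le_neg_mul_integral_of_deriv_hazardRate_le {f' : ℝ → ℝ} {a b c : ℝ} (ha : 0 ≤ a)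
    (hf_pos : ∀ x ∈ Ici (0 : ℝ), 0 < f x) (hf_cont : ContinuousOn f (Ici 0))
    (hf_int : IntegrableOn f (Ici 0)) (hf' : ∀ x ∈ Ioo a b, HasDerivAt f (f' x) x)
    (hr : ∀ x ∈ Ioo a b, deriv (hazardRate f) x ≤ hazardRate f x ^ 2 - c * hazardRate f x) :
    ∀ p ∈ Icc a b, ∀ q ∈ Icc a b, p ≤ q → f q - f p ≤ -(c * ∫ x in p..q, f x) := by
  refine sub_le_neg_mul_integral_of_deriv_add_mul_nonpos (hf_cont.mono fun x hx => ha.trans hx.1)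
    hf' fun x hx => ?_
  have hS := survival_pos hf_pos hf_int (ha.trans hx.1.le)
  rw [add_const_mul_eq_survival_mul_hazardRate (hf' x hx)
    (hasDerivAt_survival hf_cont hf_int (ha.trans_lt hx.1)) hS.ne']
  exact mul_nonpos_of_nonneg_of_nonpos hS.le (by linarith [hr x hx])

end Survival

section Renewal

variable {f m : ℝ → ℝ} {t₂ t₃ : ℝ}

lemma continuousWithinAt_zero_of_renewal (hf_cont : ContinuousOn f (Ici 0))
    (hm_loc : LocallyIntegrableOn m (Ici 0))
    (hm_eq : ∀ t ∈ Ici (0 : ℝ), m t = f t + ∫ x in (0 : ℝ)..t, m x * f (t - x)) :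
    ContinuousWithinAt m (Ici 0) 0 := by
  obtain ⟨C, hC⟩ := isCompact_Icc.exists_bound_of_continuousOn
    (hf_cont.mono (Icc_subset_Ici_self : Icc (0 : ℝ) 1 ⊆ Ici 0))
  have hm_int : IntegrableOn (fun x => C * |m x|) (Icc 0 1) :=
    (hm_loc.integrableOn_compact_subset Icc_subset_Ici_self isCompact_Icc).abs.const_mul C
  have hnhds : 𝓝[Icc 0 1] (0 : ℝ) = 𝓝[Ici 0] 0 := nhdsWithin_Icc_eq_nhdsGE zero_lt_one
  have hprim : Tendsto (fun s => ∫ x in (0 : ℝ)..s, C * |m x|) (𝓝[Ici 0] 0) (𝓝 0) := by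
    have h := intervalIntegral.continuousWithinAt_primitive (a := 0) (b₀ := 0) (b₁ := 0)
      (b₂ := 1) (μ := volume) (f := fun x => C * |m x|) (by simp)
      (by simpa using (intervalIntegrable_iff_integrableOn_Ioc_of_le zero_le_one).2
            (hm_int.mono_set Ioc_subset_Icc_self))
    rwa [ContinuousWithinAt, hnhds, intervalIntegral.integral_same] at h
  have hconv : Tendsto (fun s => ∫ x in (0 : ℝ)..s, m x * f (s - x)) (𝓝[Ici 0] 0) (𝓝 0) := by
    refine squeeze_zero_norm' ?_ hprim
    filter_upwards [hnhds ▸ self_mem_nhdsWithin] with s hs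
    refine intervalIntegral.norm_integral_le_of_norm_le hs.1 (ae_of_all _ fun x hx => ?_)
      ((intervalIntegrable_iff_integrableOn_Ioc_of_le hs.1).2
        (hm_int.mono_set (Ioc_subset_Icc_self.trans (Icc_subset_Icc_right hs.2))))
    rw [norm_mul, mul_comm]
    exact mul_le_mul_of_nonneg_right (hC _ ⟨by linarith [hx.2], by linarith [hx.1, hs.2]⟩)
      (abs_nonneg _)
  have hm0 : m 0 = f 0 + 0 := by simpa using hm_eq 0 self_mem_Ici
  rw [ContinuousWithinAt, hm0]
  exact ((hf_cont 0 self_mem_Ici).tendsto.add hconv).congr'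
    (eventually_nhdsWithin_of_forall fun t ht => (hm_eq t ht).symm)

lemma continuousOn_of_renewal (hf_cont : ContinuousOn f (Ici 0))
    (hm_loc : LocallyIntegrableOn m (Ici 0))
    (hm_eq : ∀ t ∈ Ici (0 : ℝ), m t = f t + ∫ x in (0 : ℝ)..t, m x * f (t - x))
    (hm_diff : ∀ x : ℝ, 0 < x → DifferentiableAt ℝ m x) : ContinuousOn m (Ici 0) := by
  rintro x (hx : 0 ≤ x)
  rcases hx.eq_or_lt with rfl | hx
  · exact continuousWithinAt_zero_of_renewal hf_cont hm_loc hm_eq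
  · exact (hm_diff x hx).continuousAt.continuousWithinAt

lemma continuousOn_comp_const_sub (hm_cont : ContinuousOn m (Ici 0)) (d : ℝ) :
    ContinuousOn (fun x => m (d - x)) (Iic d) :=
  hm_cont.comp (continuousOn_const.sub continuousOn_id) fun _ hx => sub_nonneg.2 (mem_Iic.1 hx)

lemma intervalIntegrable_comp_sub_mul (hf_cont : ContinuousOn f (Ici 0))
    (hm_cont : ContinuousOn m (Ici 0)) {a b d : ℝ} (ha : 0 ≤ a) (hab : a ≤ b) (hbd : b ≤ d) :
    IntervalIntegrable (fun x => m (d - x) * f x) volume a b :=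
  (((continuousOn_comp_const_sub hm_cont d).mono fun _ hx => hx.2.trans hbd).mul
    (hf_cont.mono fun _ hx => ha.trans hx.1)).intervalIntegrable_of_Icc hab

lemma intervalIntegrable_sub_comp_sub_mul (hf_cont : ContinuousOn f (Ici 0))
    (hm_cont : ContinuousOn m (Ici 0)) {p q : ℝ} (hp : 0 ≤ p) (hpq : p ≤ q) :
    IntervalIntegrable (fun x => (m (q - x) - m (p - x)) * f x) volume 0 p := by
  simpa only [sub_mul] using
    (intervalIntegrable_comp_sub_mul hf_cont hm_cont le_rfl hp hpq).sub
      (intervalIntegrable_comp_sub_mul hf_cont hm_cont le_rfl hp le_rfl)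

lemma renewal_sub_le_integral (hf_cont : ContinuousOn f (Ici 0))
    (hf_nonneg : ∀ x ∈ Ici (0 : ℝ), 0 ≤ f x) (hm_cont : ContinuousOn m (Ici 0))
    (hm_eq : ∀ t ∈ Ici (0 : ℝ), m t = f t + ∫ x in (0 : ℝ)..t, m x * f (t - x))
    {p q : ℝ} (hp : 0 ≤ p) (hpq : p ≤ q) (hm_anti : AntitoneOn m (Icc 0 (q - p)))
    (hf_sub : f q - f p ≤ -(f 0 * ∫ x in p..q, f x)) :
    m q - m p ≤ ∫ x in (0 : ℝ)..p, (m (q - x) - m (p - x)) * f x := by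
  have hm_eq' : ∀ t ∈ Ici (0 : ℝ), m t = f t + ∫ x in (0 : ℝ)..t, m (t - x) * f x :=
    fun t ht => by rw [hm_eq t ht, intervalIntegral_mul_comp_sub_comm]
  have hm_le : ∀ u ∈ Icc 0 (q - p), m u ≤ f 0 := fun u hu => by
    simpa using hm_anti ⟨le_rfl, hu.1.trans hu.2⟩ hu hu.1 |>.trans_eq (hm_eq 0 self_mem_Ici)
  have hsplit := intervalIntegral.integral_add_adjacent_intervals
    (intervalIntegrable_comp_sub_mul hf_cont hm_cont le_rfl hp hpq)
    (intervalIntegrable_comp_sub_mul hf_cont hm_cont hp hpq le_rfl)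
  have hdiff : ∫ x in (0 : ℝ)..p, (m (q - x) - m (p - x)) * f x =
      (∫ x in (0 : ℝ)..p, m (q - x) * f x) - ∫ x in (0 : ℝ)..p, m (p - x) * f x := by
    simp only [sub_mul]
    exact intervalIntegral.integral_sub
      (intervalIntegrable_comp_sub_mul hf_cont hm_cont le_rfl hp hpq)
      (intervalIntegrable_comp_sub_mul hf_cont hm_cont le_rfl hp le_rfl)
  have htail : ∫ x in p..q, m (q - x) * f x ≤ f 0 * ∫ x in p..q, f x := by
    rw [← intervalIntegral.integral_const_mul]
    refine intervalIntegral.integral_mono_on hpq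
      (intervalIntegrable_comp_sub_mul hf_cont hm_cont hp hpq le_rfl)
      ((hf_cont.mono fun x hx => hp.trans hx.1).intervalIntegrable_of_Icc hpq |>.const_mul _)
      fun x hx => mul_le_mul_of_nonneg_right (hm_le _ ⟨by linarith [hx.2], by linarith [hx.1]⟩)
        (hf_nonneg x (hp.trans hx.1))
  linarith [hm_eq' q (hp.trans hpq), hm_eq' p hp]

lemma exists_max_increment_on_short_pairs (ht₂ : 0 ≤ t₂) (ht₂₃ : t₂ ≤ t₃)
    (hm_cont : ContinuousOn m (Ici 0)) :
    ∃ p q, t₂ ≤ p ∧ p ≤ q ∧ q ≤ t₃ ∧ q - p ≤ t₂ ∧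
      ∀ p' q', t₂ ≤ p' → p' ≤ q' → q' ≤ t₃ → q' - p' ≤ t₂ → m q' - m p' ≤ m q - m p := by
  set R : Set (ℝ × ℝ) :=
    {z | t₂ ≤ z.1} ∩ {z | z.1 ≤ z.2} ∩ {z | z.2 ≤ t₃} ∩ {z | z.2 - z.1 ≤ t₂} with hR
  have hR_compact : IsCompact R := by
    refine (isCompact_Icc.prod (isCompact_Icc (a := t₂) (b := t₃))).of_isClosed_subset ?_
      fun z hz => ⟨⟨hz.1.1.1, hz.1.1.2.trans hz.1.2⟩, ⟨hz.1.1.1.trans hz.1.1.2, hz.1.2⟩⟩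
    refine (((isClosed_le ?_ ?_).inter (isClosed_le ?_ ?_)).inter (isClosed_le ?_ ?_)).inter
      (isClosed_le ?_ ?_) <;> fun_prop
  obtain ⟨z, ⟨⟨⟨hz₁, hz₁₂⟩, hz₂⟩, hz₂₁⟩, hmax⟩ :=
    hR_compact.exists_isMaxOn ⟨(t₂, t₂), by simp [hR, ht₂₃, ht₂]⟩ (f := fun z => m z.2 - m z.1)
      ((hm_cont.comp continuousOn_snd fun z hz => ht₂.trans (hz.1.1.1.trans hz.1.1.2)).sub
        (hm_cont.comp continuousOn_fst fun z hz => ht₂.trans hz.1.1.1))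
  exact ⟨z.1, z.2, hz₁, hz₁₂, hz₂, hz₂₁, fun p' q' h₁ h₁₂ h₂ h₂₁ =>
    isMaxOn_iff.1 hmax (p', q') ⟨⟨⟨h₁, h₁₂⟩, h₂⟩, h₂₁⟩⟩

lemma sub_le_of_short_pairs_of_antitoneOn (hm_anti : AntitoneOn m (Icc 0 t₂)) {K : ℝ}
    (hK₀ : 0 ≤ K) (hK : ∀ p q, t₂ ≤ p → p ≤ q → q ≤ t₃ → q - p ≤ t₂ → m q - m p ≤ K)
    {a b : ℝ} (ha : 0 ≤ a) (hab : a ≤ b) (hb : b ≤ t₃) (hba : b - a ≤ t₂) : m b - m a ≤ K := by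
  by_cases hta : t₂ ≤ a
  · exact hK a b hta hab hb hba
  by_cases hbt : b ≤ t₂
  · linarith [hm_anti ⟨ha, hab.trans hbt⟩ ⟨ha.trans hab, hbt⟩ hab]
  · linarith [hK t₂ b le_rfl (by linarith) hb (by linarith),
      hm_anti ⟨ha, by linarith⟩ ⟨by linarith, le_rfl⟩ (by linarith : a ≤ t₂)]

lemma le_of_sub_le_integral_short_pairs (ht₂ : 0 ≤ t₂) (ht₂₃ : t₂ ≤ t₃)
    (hf_cont : ContinuousOn f (Ici 0)) (hf_nonneg : ∀ x ∈ Ici (0 : ℝ), 0 ≤ f x)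
    (hf_lt_one : ∀ p ∈ Icc t₂ t₃, ∫ x in (0 : ℝ)..p, f x < 1)
    (hm_cont : ContinuousOn m (Ici 0)) (hm_anti : AntitoneOn m (Icc 0 t₂))
    (hm_sub : ∀ p q, t₂ ≤ p → p ≤ q → q ≤ t₃ → q - p ≤ t₂ →
      m q - m p ≤ ∫ x in (0 : ℝ)..p, (m (q - x) - m (p - x)) * f x)
    {p q : ℝ} (hp : t₂ ≤ p) (hpq : p ≤ q) (hq : q ≤ t₃) (hqp : q - p ≤ t₂) : m q ≤ m p := by
  obtain ⟨p₀, q₀, hp₀, hpq₀, hq₀, hqp₀, hmax⟩ :=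
    exists_max_increment_on_short_pairs ht₂ ht₂₃ hm_cont
  set K := m q₀ - m p₀
  have hK₀ : 0 ≤ K := by simpa using hmax p₀ p₀ hp₀ le_rfl (hpq₀.trans hq₀) (by simpa using ht₂)
  have hp₀' : 0 ≤ p₀ := ht₂.trans hp₀
  have hK_le : K ≤ K * ∫ x in (0 : ℝ)..p₀, f x := calc
    K ≤ ∫ x in (0 : ℝ)..p₀, (m (q₀ - x) - m (p₀ - x)) * f x := hm_sub p₀ q₀ hp₀ hpq₀ hq₀ hqp₀
    _ ≤ ∫ x in (0 : ℝ)..p₀, K * f x := by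
      refine intervalIntegral.integral_mono_on hp₀'
        (intervalIntegrable_sub_comp_sub_mul hf_cont hm_cont hp₀' hpq₀)
        ((hf_cont.mono fun x hx => hx.1).intervalIntegrable_of_Icc hp₀' |>.const_mul K)
        fun x hx => mul_le_mul_of_nonneg_right ?_ (hf_nonneg x hx.1)
      exact sub_le_of_short_pairs_of_antitoneOn hm_anti hK₀ hmax (by linarith [hx.2])
        (by linarith) (by linarith [hx.1]) (by linarith)
    _ = K * ∫ x in (0 : ℝ)..p₀, f x := intervalIntegral.integral_const_mul K f
  have hK_nonpos : K ≤ 0 := by nlinarith [hf_lt_one p₀ ⟨hp₀, hpq₀.trans hq₀⟩]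
  linarith [hmax p q hp hpq hq hqp]

lemma antitoneOn_Icc_of_short_pairs (ht₂ : 0 < t₂) (hm_cont : ContinuousOn m (Icc 0 t₃))
    (hm_diff : ∀ x ∈ Ioo 0 t₃, DifferentiableAt ℝ m x)
    (hm'_neg : ∀ x ∈ Ioo 0 t₂, deriv m x < 0)
    (hm_short : ∀ p q, t₂ ≤ p → p ≤ q → q ≤ t₃ → q - p ≤ t₂ → m q ≤ m p) :
    AntitoneOn m (Icc 0 t₃) := by
  refine antitoneOn_of_deriv_nonpos (convex_Icc 0 t₃) hm_cont
    (fun x hx => ?_) fun x hx => ?_ <;> rw [interior_Icc] at hx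
  · exact (hm_diff x hx).differentiableWithinAt
  rcases lt_or_ge x t₂ with hxt | hxt
  · exact (hm'_neg x ⟨hx.1, hxt⟩).le
  refine (hm_diff x hx).hasDerivAt.le_of_eventually_sub_le ?_
  filter_upwards [Ioo_mem_nhdsGT hx.2, Ioo_mem_nhdsGT (lt_add_of_pos_right x ht₂)] with s hs hs'
  rw [zero_mul, sub_nonpos]
  exact hm_short x s hxt hs.1.le hs.2.le (by linarith [hs'.2])

lemma renewal_sub_le_mul_sub (ht₂ : 0 ≤ t₂) (hf_cont : ContinuousOn f (Ici 0))
    (hm_cont : ContinuousOn m (Ici 0)) (hm_anti : AntitoneOn m (Icc 0 t₃)) {c : ℝ}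
    (hc₀ : 0 ≤ c) (hc : ∀ x ∈ Icc 0 t₃, c ≤ f x)
    (hm_sub : ∀ p q, t₂ ≤ p → p ≤ q → q ≤ t₃ → q - p ≤ t₂ →
      m q - m p ≤ ∫ x in (0 : ℝ)..p, (m (q - x) - m (p - x)) * f x)
    {t s : ℝ} (ht : t₂ ≤ t) (hts : t ≤ s) (hs : s ≤ t₃) (hst : s - t ≤ t₂ / 2) :
    m s - m t ≤ c * (m t₂ - m (t₂ / 2)) * (s - t) := by
  have ht₀ : 0 ≤ t := ht₂.trans ht
  have hshift : ∫ x in (0 : ℝ)..t, (m (s - x) - m (t - x)) =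
      ∫ y in (0 : ℝ)..t, (m (y + (s - t)) - m y) := by
    simpa [sub_add_sub_cancel'] using
      intervalIntegral.integral_comp_sub_left (fun y => m (y + (s - t)) - m y) t (a := 0) (b := t)
  have hm_le : m t - m (s - t) ≤ m t₂ - m (t₂ / 2) := by
    linarith [hm_anti ⟨ht₂, ht.trans (hts.trans hs)⟩ ⟨ht₀, hts.trans hs⟩ ht,
      hm_anti ⟨by linarith, by linarith⟩ ⟨by linarith, by linarith⟩ hst]
  have hslide : ∫ y in (0 : ℝ)..t, (m (y + (s - t)) - m y) ≤ (s - t) * (m t - m (s - t)) := by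
    simpa using (hm_anti.mono (Icc_subset_Icc_right (by linarith))).integral_comp_add_sub_le ht₀
      (sub_nonneg.2 hts)
  calc m s - m t ≤ ∫ x in (0 : ℝ)..t, (m (s - x) - m (t - x)) * f x :=
        hm_sub t s ht hts hs (by linarith)
    _ ≤ ∫ x in (0 : ℝ)..t, c * (m (s - x) - m (t - x)) := by
        refine intervalIntegral.integral_mono_on ht₀
          (intervalIntegrable_sub_comp_sub_mul hf_cont hm_cont ht₀ hts)
          ((((continuousOn_comp_const_sub hm_cont s).mono fun _ hx => hx.2.trans hts).sub
            ((continuousOn_comp_const_sub hm_cont t).mono fun _ hx => hx.2))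
              |>.intervalIntegrable_of_Icc ht₀ |>.const_mul c)
          fun x hx => ?_
        rw [mul_comm c]
        exact mul_le_mul_of_nonpos_left (hc x ⟨hx.1, by linarith [hx.2]⟩)
          (sub_nonpos.2 (hm_anti ⟨by linarith [hx.2], by linarith [hx.1]⟩
            ⟨by linarith [hx.2], by linarith [hx.1]⟩ (by linarith)))
    _ = c * ∫ y in (0 : ℝ)..t, (m (y + (s - t)) - m y) := by
        rw [intervalIntegral.integral_const_mul, hshift]
    _ ≤ c * (m t₂ - m (t₂ / 2)) * (s - t) := by
        linarith [mul_le_mul_of_nonneg_left hslide hc₀,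
          mul_le_mul_of_nonneg_left hm_le (mul_nonneg hc₀ (sub_nonneg.2 hts))]

lemma deriv_neg_of_renewal (ht₂ : 0 < t₂) (hf_pos : ∀ x ∈ Ici (0 : ℝ), 0 < f x)
    (hf_cont : ContinuousOn f (Ici 0)) (hm_cont : ContinuousOn m (Ici 0))
    (hm_diff : ∀ x : ℝ, 0 < x → DifferentiableAt ℝ m x) (hm_anti : AntitoneOn m (Icc 0 t₃))
    (hm_lt : m t₂ < m (t₂ / 2))
    (hm_sub : ∀ p q, t₂ ≤ p → p ≤ q → q ≤ t₃ → q - p ≤ t₂ →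
      m q - m p ≤ ∫ x in (0 : ℝ)..p, (m (q - x) - m (p - x)) * f x) :
    ∀ t ∈ Ioo t₂ t₃, deriv m t < 0 := by
  intro t ht
  obtain ⟨x₀, hx₀, hmin⟩ := isCompact_Icc.exists_isMinOn
    (nonempty_Icc.2 ((ht₂.trans ht.1).trans ht.2).le)
    (hf_cont.mono (Icc_subset_Ici_self : Icc 0 t₃ ⊆ Ici 0))
  refine ((hm_diff t (ht₂.trans ht.1)).hasDerivAt.le_of_eventually_sub_le ?_).trans_lt
    (mul_neg_of_pos_of_neg (hf_pos x₀ hx₀.1) (sub_neg.2 hm_lt))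
  filter_upwards [Ioo_mem_nhdsGT ht.2, Ioo_mem_nhdsGT (by linarith : t < t + t₂ / 2)]
    with s hs hs'
  exact renewal_sub_le_mul_sub ht₂.le hf_cont hm_cont hm_anti (hf_pos x₀ hx₀.1).le
    (isMinOn_iff.1 hmin) hm_sub ht.1.le hs.1.le hs.2.le (by linarith [hs'.2])

end Renewal

theorem renewal_density_strict_decrease_on_middle_interval_general
    (t₂ t₃ : ℝ) (ht₂ : 0 < t₂) (ht₂₃ : t₂ < t₃)
    (f m : ℝ → ℝ)
    (hf_pos : ∀ x ∈ Set.Ici (0 : ℝ), 0 < f x)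
    (hf_cont : ContinuousOn f (Set.Ici 0))
    (hf_int : IntegrableOn f (Set.Ici 0))
    (hf_one : (∫ x in Set.Ici (0 : ℝ), f x) = 1)
    (hf_c1 : ∃ g : ℝ → ℝ, ContinuousOn g (Set.Icc t₂ t₃) ∧
      ∀ t ∈ Set.Icc t₂ t₃, HasDerivWithinAt f (g t) (Set.Icc t₂ t₃) t)
    (hm_loc : LocallyIntegrableOn m (Set.Ici 0))
    (hm_eq : ∀ t ∈ Set.Ici (0 : ℝ), m t = f t + ∫ x in (0 : ℝ)..t, m x * f (t - x))
    (hm_diff : ∀ x : ℝ, 0 < x → DifferentiableAt ℝ m x)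
    (hm'_neg : ∀ x ∈ Set.Ioo 0 t₂, deriv m x < 0)
    (hr : ∀ t ∈ Set.Ioo t₂ t₃,
      deriv (hazardRate f) t ≤ (hazardRate f t) ^ 2 - f 0 * hazardRate f t) :
    (∀ t ∈ Set.Ioo t₂ t₃, deriv m t < 0) ∧ StrictAntiOn m (Set.Icc t₂ t₃) := by
  obtain ⟨g, -, hg⟩ := hf_c1
  have hf_nonneg : ∀ x ∈ Ici (0 : ℝ), 0 ≤ f x := fun x hx => (hf_pos x hx).le
  have hf_sub := sub_le_neg_mul_integral_of_deriv_hazardRate_le ht₂.le hf_pos hf_cont hf_int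
    (fun x hx => (hg x (Ioo_subset_Icc_self hx)).hasDerivAt (Icc_mem_nhds hx.1 hx.2)) hr
  have hm_cont := continuousOn_of_renewal hf_cont hm_loc hm_eq hm_diff
  have hm_anti₂ : StrictAntiOn m (Icc 0 t₂) := strictAntiOn_of_deriv_neg (convex_Icc 0 t₂)
    (hm_cont.mono Icc_subset_Ici_self) (by rwa [interior_Icc])
  have hm_sub : ∀ p q, t₂ ≤ p → p ≤ q → q ≤ t₃ → q - p ≤ t₂ →
      m q - m p ≤ ∫ x in (0 : ℝ)..p, (m (q - x) - m (p - x)) * f x :=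
    fun p q hp hpq hq hqp => renewal_sub_le_integral hf_cont hf_nonneg hm_cont hm_eq
      (ht₂.le.trans hp) hpq (hm_anti₂.antitoneOn.mono (Icc_subset_Icc_right hqp))
      (hf_sub p ⟨hp, hpq.trans hq⟩ q ⟨hp.trans hpq, hq⟩ hpq)
  have hm_anti : AntitoneOn m (Icc 0 t₃) := antitoneOn_Icc_of_short_pairs ht₂
    (hm_cont.mono Icc_subset_Ici_self) (fun x hx => hm_diff x hx.1) hm'_neg
    fun p q => le_of_sub_le_integral_short_pairs ht₂.le ht₂₃.le hf_cont hf_nonneg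
      (fun p hp => intervalIntegral_lt_one_of_density hf_pos hf_int hf_one (ht₂.le.trans hp.1))
      hm_cont hm_anti₂.antitoneOn hm_sub
  have hm_deriv := deriv_neg_of_renewal ht₂ hf_pos hf_cont hm_cont hm_diff hm_anti
    (hm_anti₂ ⟨by linarith, by linarith⟩ ⟨ht₂.le, le_rfl⟩ (by linarith)) hm_sub
  exact ⟨hm_deriv, strictAntiOn_of_deriv_neg (convex_Icc t₂ t₃)
    (hm_cont.mono fun x hx => ht₂.le.trans hx.1) (by rwa [interior_Icc])⟩

/-- **Second step in the proof of Proposition 1 (decrease on `[t₂, t₃]`).**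
Let `f` be a positive probability density on `[0, ∞)`, continuous on `[0, ∞)` and
continuously differentiable on `[t₂, t₃]` (`0 < t₂ < t₃`, one-sided derivatives at the
endpoints), with hazard rate `r = f / F̄`.  Let `m` be the renewal density, i.e. the
solution of `m t = f t + ∫ x in 0..t, m x * f (t - x)` for `t ≥ 0`; assume `m` is
differentiable with `m' x < 0` for all `x ∈ (0, t₂)`.  If
`r' t ≤ r t ^ 2 - f 0 * r t` for all `t ∈ (t₂, t₃)`, then `m' t < 0` for all
`t ∈ (t₂, t₃)`; in particular `m` is strictly decreasing on `[t₂, t₃]`. -/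
theorem renewal_density_strict_decrease_on_middle_interval
    (t₂ t₃ : ℝ) (ht₂ : 0 < t₂) (ht₂₃ : t₂ < t₃)
    (f m : ℝ → ℝ)
    (hf_meas : Measurable f)
    (hf_pos : ∀ x ∈ Set.Ici (0 : ℝ), 0 < f x)
    (hf_cont : ContinuousOn f (Set.Ici 0))
    (hf_int : IntegrableOn f (Set.Ici 0))
    (hf_one : (∫ x in Set.Ici (0 : ℝ), f x) = 1)
    (hf_c1 : ∃ g : ℝ → ℝ, ContinuousOn g (Set.Icc t₂ t₃) ∧
      ∀ t ∈ Set.Icc t₂ t₃, HasDerivWithinAt f (g t) (Set.Icc t₂ t₃) t)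
    (hm_loc : LocallyIntegrableOn m (Set.Ici 0))
    (hm_eq : ∀ t ∈ Set.Ici (0 : ℝ), m t = f t + ∫ x in (0 : ℝ)..t, m x * f (t - x))
    (hm_diff : ∀ x : ℝ, 0 < x → DifferentiableAt ℝ m x)
    (hm'_neg : ∀ x ∈ Set.Ioo 0 t₂, deriv m x < 0)
    (hr : ∀ t ∈ Set.Ioo t₂ t₃,
      deriv (hazardRate f) t ≤ (hazardRate f t) ^ 2 - f 0 * hazardRate f t) :
    (∀ t ∈ Set.Ioo t₂ t₃, deriv m t < 0) ∧ StrictAntiOn m (Set.Icc t₂ t₃) :=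
  renewal_density_strict_decrease_on_middle_interval_general t₂ t₃ ht₂ ht₂₃ f m hf_pos hf_cont
    hf_int hf_one hf_c1 hm_loc hm_eq hm_diff hm'_neg hr
end

section
/- Let X be a random variable on ℕ = {1, 2, …}, p ∈ (0,1), q = 1 − p, and let Y = Σ_{k=1}^{T} X_k be the compound geometric sum, where T is geometric with P(T = n) = p q^{n−1} and X₁, X₂, … are i.i.d. copies of X independent of T. Write F̄_n = P(X ≥ n) and Ḡ_n = P(Y ≥ n). Then Ḡ₃ Ḡ₁ − Ḡ₂² = p (F̄₃ F̄₁ − F̄₂²). -/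
/-!
Since `f 0 = 0`, the `m`-fold convolution power of `f` vanishes below `m`, so only finitely many
terms of the series defining `g = compoundGeom p f` contribute to `g 0`, `g 1`, `g 2`: they are `0`,
`p f₁` and `p f₂ + p q f₁²`. Being a mixture of probability distributions, `g` is again one, so
`Ḡₙ = 1 - ∑_{i<n} gᵢ`, and the identity becomes a polynomial identity in `p`, `f₁`, `f₂`.
-/

open Finset

/-- Convolution of two distributions on `ℕ`. -/
def convNat (a b : ℕ → ℝ) : ℕ → ℝ := fun n => ∑ k ∈ Finset.range (n + 1), a k * b (n - k)

/-- `j`-fold convolution power of `f` (with `convPowNat f 0` the unit mass at `0`),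
so that `convPowNat f j` is the distribution of the sum of `j` i.i.d. copies of `X`. -/
def convPowNat (f : ℕ → ℝ) : ℕ → ℕ → ℝ
  | 0 => fun n => if n = 0 then 1 else 0
  | j + 1 => convNat (convPowNat f j) f

/-- The distribution `g` of the compound geometric sum `Y = Σ_{k=1}^T X_k`, where
`P(T = j) = p q^{j-1}` (`q = 1 - p`) and the `X_k` are i.i.d. with distribution `f`,
independent of `T`: `g n = Σ_{j≥1} p q^{j-1} f^{*j} n`. -/
noncomputable def compoundGeom (p : ℝ) (f : ℕ → ℝ) : ℕ → ℝ :=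
  fun n => ∑' j : ℕ, p * (1 - p) ^ j * convPowNat f (j + 1) n

/-- Tail (survival) function `n ↦ P(Z ≥ n)` of a distribution `h` on `ℕ`. -/
noncomputable def tailNat (h : ℕ → ℝ) : ℕ → ℝ := fun n => ∑' k : ℕ, h (n + k)

section Convolution

variable {f : ℕ → ℝ}

lemma hasSum_convNat_of_nonneg {a b : ℕ → ℝ} {s t : ℝ} (ha₀ : 0 ≤ a) (hb₀ : 0 ≤ b)
    (ha : HasSum a s) (hb : HasSum b t) : HasSum (convNat a b) (s * t) := by
  have hna : Summable fun n => ‖a n‖ := by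
    simpa only [Real.norm_of_nonneg (ha₀ _)] using ha.summable
  have hnb : Summable fun n => ‖b n‖ := by
    simpa only [Real.norm_of_nonneg (hb₀ _)] using hb.summable
  have := hasSum_sum_range_mul_of_summable_norm hna hnb
  rwa [ha.tsum_eq, hb.tsum_eq] at this

lemma convPowNat_succ (m : ℕ) : convPowNat f (m + 1) = convNat (convPowNat f m) f := rfl

lemma convPowNat_nonneg (hf : 0 ≤ f) : ∀ m, 0 ≤ convPowNat f m
  | 0, n => by by_cases h : n = 0 <;> simp [convPowNat, h]
  | m + 1, _ => by
    rw [convPowNat_succ]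
    exact sum_nonneg fun _ _ => mul_nonneg (convPowNat_nonneg hf m _) (hf _)

lemma hasSum_convPowNat (hf : 0 ≤ f) (hf_sum : HasSum f 1) : ∀ m, HasSum (convPowNat f m) 1
  | 0 => hasSum_ite_eq 0 1
  | m + 1 => by
    rw [convPowNat_succ, ← one_mul 1]
    exact hasSum_convNat_of_nonneg (convPowNat_nonneg hf m) hf
      (hasSum_convPowNat hf hf_sum m) hf_sum

lemma convPowNat_eq_zero_of_lt (hf0 : f 0 = 0) : ∀ {m n}, n < m → convPowNat f m n = 0
  | m + 1, n, h => by
    rw [convPowNat_succ]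
    refine sum_eq_zero fun k hk => ?_
    rcases lt_or_ge k m with hkm | hkm
    · rw [convPowNat_eq_zero_of_lt hf0 hkm, zero_mul]
    · rw [show n - k = 0 by grind, hf0, mul_zero]

lemma convPowNat_one (n : ℕ) : convPowNat f 1 n = f n := by
  simp [convPowNat, convNat, ite_mul]

lemma convPowNat_two_two (hf0 : f 0 = 0) : convPowNat f 2 2 = f 1 ^ 2 := by
  simp [convPowNat, convNat, sum_range_succ, hf0, sq]

end Convolution

lemma tailNat_eq_one_sub_sum {h : ℕ → ℝ} (hs : HasSum h 1) (n : ℕ) :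
    tailNat h n = 1 - ∑ i ∈ range n, h i := by
  have := hs.summable.sum_add_tsum_nat_add n
  simp only [hs.tsum_eq, tailNat, add_comm n] at this ⊢
  linarith

lemma hasSum_tsum_mul_of_hasSum_one {w : ℕ → ℝ} {μ : ℕ → ℕ → ℝ} (hw₀ : 0 ≤ w)
    (hμ₀ : ∀ j, 0 ≤ μ j) (hw : HasSum w 1) (hμ : ∀ j, HasSum (μ j) 1) :
    HasSum (fun n => ∑' j, w j * μ j n) 1 := by
  have hrow : ∀ j, HasSum (fun n => w j * μ j n) (w j) := fun j => by
    simpa only [mul_one] using (hμ j).mul_left (w j)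
  have hG : Summable (Function.uncurry fun j n => w j * μ j n) :=
    (summable_prod_of_nonneg fun x => mul_nonneg (hw₀ _) (hμ₀ _ _)).2
      ⟨fun j => (hrow j).summable, by simpa only [(hrow _).tsum_eq] using hw.summable⟩
  have htotal : ∑' n, ∑' j, w j * μ j n = 1 := by
    rw [hG.tsum_comm, ← hw.tsum_eq]
    exact tsum_congr fun j => (hrow j).tsum_eq
  exact htotal ▸ hG.prod_symm.prod.hasSum

lemma hasSum_geometric_weights {p : ℝ} (hp0 : 0 < p) (hp1 : p ≤ 1) :
    HasSum (fun j : ℕ => p * (1 - p) ^ j) 1 := by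
  have := (hasSum_geometric_of_lt_one (sub_nonneg.2 hp1) (by linarith)).mul_left p
  rwa [sub_sub_cancel, mul_inv_cancel₀ hp0.ne'] at this

lemma hasSum_compoundGeom {p : ℝ} (hp0 : 0 < p) (hp1 : p ≤ 1) {f : ℕ → ℝ} (hf : 0 ≤ f)
    (hf_sum : HasSum f 1) : HasSum (compoundGeom p f) 1 :=
  hasSum_tsum_mul_of_hasSum_one (fun j => mul_nonneg hp0.le (pow_nonneg (sub_nonneg.2 hp1) j))
    (fun j => convPowNat_nonneg hf (j + 1)) (hasSum_geometric_weights hp0 hp1)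
    (fun j => hasSum_convPowNat hf hf_sum (j + 1))

lemma compoundGeom_eq_sum_range (p : ℝ) {f : ℕ → ℝ} (hf0 : f 0 = 0) (n : ℕ) :
    compoundGeom p f n = ∑ j ∈ range n, p * (1 - p) ^ j * convPowNat f (j + 1) n :=
  tsum_eq_sum fun j hj => by
    rw [convPowNat_eq_zero_of_lt hf0 (by simpa using hj), mul_zero]

/-- **The `n = 1` case of the key identity:** `Ḡ₃ Ḡ₁ − Ḡ₂² = p (F̄₃ F̄₁ − F̄₂²)`,
where `X` is a random variable on `ℕ = {1, 2, …}` with distribution `f` (so `f 0 = 0`),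
`Y` is the compound geometric sum with parameter `p ∈ (0, 1)`, and
`F̄ n = P(X ≥ n)`, `Ḡ n = P(Y ≥ n)`. -/
theorem compoundGeom_initial_identity
    (p : ℝ) (hp : p ∈ Set.Ioo (0 : ℝ) 1)
    (f : ℕ → ℝ) (hf0 : f 0 = 0) (hf_nonneg : ∀ n, 0 ≤ f n) (hf_sum : HasSum f 1) :
    tailNat (compoundGeom p f) 3 * tailNat (compoundGeom p f) 1 -
        tailNat (compoundGeom p f) 2 ^ 2 =
      p * (tailNat f 3 * tailNat f 1 - tailNat f 2 ^ 2) := by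
  have hg_sum := hasSum_compoundGeom hp.1 hp.2.le hf_nonneg hf_sum
  simp only [tailNat_eq_one_sub_sum hg_sum, tailNat_eq_one_sub_sum hf_sum, sum_range_succ,
    range_zero, sum_empty, zero_add, compoundGeom_eq_sum_range p hf0, convPowNat_one,
    convPowNat_two_two hf0, hf0]
  ring
end
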